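/- A permutation σ ∈ S_n is alternating (σ(1) > σ(2) < σ(3) > ⋯) if and only if its Lehmer code (L_1,…,L_n) satisfies L_{2i−1} > L_{2i} for all i with 2i ≤ n and L_{2i} ≤ L_{2i+1} for all i with 2i+1 ≤ n. -/
import Mathlib


/-- A permutation of `Fin n` is alternating if `σ(1) > σ(2) < σ(3) > σ(4) < ⋯`
(in 1-based terms), i.e. it descends at odd (1-based) positions and ascends at even ones. -/
def IsAlt {n : ℕ} (σ : Equiv.Perm (Fin n)) : Prop :=
  ∀ i : ℕ, ∀ h : i + 1 < n,
    if i % 2 = 0 then σ ⟨i + 1, h⟩ < σ ⟨i, Nat.lt_of_succ_lt h⟩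
    else σ ⟨i, Nat.lt_of_succ_lt h⟩ < σ ⟨i + 1, h⟩


/-- The Lehmer code `L_i` (1-based `i`, `1 ≤ i ≤ n`) of a permutation:
`L_i = #{j > i : σ(j) < σ(i)}`. For `i` out of range the value is `0`. -/
def lcode {n : ℕ} (σ : Equiv.Perm (Fin n)) (i : ℕ) : ℕ :=
  (Finset.univ.filter
    (fun p : Fin n × Fin n => ((p.1 : ℕ) + 1 = i) ∧ p.1 < p.2 ∧ σ p.2 < σ p.1)).card

/-- One-argument version of the Lehmer code. -/
def fcode {n : ℕ} (σ : Equiv.Perm (Fin n)) (i : Fin n) : ℕ :=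
  (Finset.univ.filter (fun j : Fin n => i < j ∧ σ j < σ i)).card

lemma lcode_eq {n : ℕ} (σ : Equiv.Perm (Fin n)) (i : Fin n) :
    lcode σ ((i : ℕ) + 1) = fcode σ i := by
  unfold lcode fcode
  apply Finset.card_bij (fun p _ => p.2)
  · intro p hp
    simp only [Finset.mem_filter, Finset.mem_univ, true_and] at hp ⊢
    have h1 : p.1 = i := Fin.ext (by omega)
    rw [← h1]
    exact hp.2
  · intro p hp q hq hpq
    simp only [Finset.mem_filter, Finset.mem_univ, true_and] at hp hq
    have h1 : p.1 = i := Fin.ext (by omega)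
    have h2 : q.1 = i := Fin.ext (by omega)
    exact Prod.ext (h1.trans h2.symm) hpq
  · intro j hj
    simp only [Finset.mem_filter, Finset.mem_univ, true_and] at hj
    exact ⟨(i, j), by simp [hj], rfl⟩

lemma fcode_lt {n : ℕ} (σ : Equiv.Perm (Fin n)) {i j : Fin n} (hij : (j : ℕ) = (i : ℕ) + 1)
    (h : σ j < σ i) : fcode σ j < fcode σ i := by
  have hset : Finset.univ.filter (fun k : Fin n => i < k ∧ σ k < σ i)
      = insert j (Finset.univ.filter (fun k : Fin n => j < k ∧ σ k < σ i)) := by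
    ext k
    simp only [Finset.mem_filter, Finset.mem_univ, true_and, Finset.mem_insert]
    constructor
    · rintro ⟨hik, hk⟩
      rw [Fin.lt_def] at hik
      rcases eq_or_lt_of_le (by omega : (j : ℕ) ≤ (k : ℕ)) with he | hl
      · exact Or.inl (Fin.ext he.symm)
      · exact Or.inr ⟨hl, hk⟩
    · rintro (rfl | ⟨hjk, hk⟩)
      · exact ⟨by rw [Fin.lt_def]; omega, h⟩
      · rw [Fin.lt_def] at hjk ⊢
        exact ⟨by omega, hk⟩
  have hnotmem : j ∉ Finset.univ.filter (fun k : Fin n => j < k ∧ σ k < σ i) := by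
    simp
  have hsub : Finset.univ.filter (fun k : Fin n => j < k ∧ σ k < σ j)
      ⊆ Finset.univ.filter (fun k : Fin n => j < k ∧ σ k < σ i) := by
    intro k hk
    simp only [Finset.mem_filter, Finset.mem_univ, true_and] at hk ⊢
    exact ⟨hk.1, hk.2.trans h⟩
  calc fcode σ j ≤ (Finset.univ.filter (fun k : Fin n => j < k ∧ σ k < σ i)).card :=
        Finset.card_le_card hsub
    _ < fcode σ i := by
        unfold fcode
        rw [hset, Finset.card_insert_of_notMem hnotmem]
        omega

lemma fcode_le {n : ℕ} (σ : Equiv.Perm (Fin n)) {i j : Fin n} (hij : (j : ℕ) = (i : ℕ) + 1)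
    (h : σ i < σ j) : fcode σ i ≤ fcode σ j := by
  apply Finset.card_le_card
  intro k hk
  simp only [Finset.mem_filter, Finset.mem_univ, true_and] at hk ⊢
  obtain ⟨hik, hki⟩ := hk
  rw [Fin.lt_def] at hik
  have hkj : k ≠ j := by
    rintro rfl
    exact absurd (hki.trans h) (lt_irrefl _)
  refine ⟨by rw [Fin.lt_def]; have := Fin.val_ne_of_ne hkj; omega, hki.trans h⟩

lemma ne_apply {n : ℕ} (σ : Equiv.Perm (Fin n)) {i j : Fin n} (hij : (j : ℕ) = (i : ℕ) + 1) :
    σ i ≠ σ j := fun he => by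
  have := σ.injective he
  subst this
  omega

lemma descent_iff {n : ℕ} (σ : Equiv.Perm (Fin n)) {i j : Fin n} (hij : (j : ℕ) = (i : ℕ) + 1) :
    σ j < σ i ↔ fcode σ j < fcode σ i := by
  constructor
  · exact fcode_lt σ hij
  · intro h
    by_contra hc
    push_neg at hc
    have : σ i < σ j := lt_of_le_of_ne hc (ne_apply σ hij)
    exact absurd h (not_lt.mpr (fcode_le σ hij this))

lemma ascent_iff {n : ℕ} (σ : Equiv.Perm (Fin n)) {i j : Fin n} (hij : (j : ℕ) = (i : ℕ) + 1) :
    σ i < σ j ↔ fcode σ i ≤ fcode σ j := by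
  constructor
  · exact fcode_le σ hij
  · intro h
    by_contra hc
    push_neg at hc
    have : σ j < σ i := lt_of_le_of_ne hc (ne_apply σ hij).symm
    exact absurd h (not_le.mpr (fcode_lt σ hij this))

/-- `σ` is alternating iff its Lehmer code satisfies `L_{2i-1} > L_{2i}` (for `2i ≤ n`)
and `L_{2i} ≤ L_{2i+1}` (for `2i+1 ≤ n`). -/
theorem alt_iff_lehmer {n : ℕ} (σ : Equiv.Perm (Fin n)) :
    IsAlt σ ↔
      ((∀ i : ℕ, 1 ≤ i → 2 * i ≤ n → lcode σ (2 * i) < lcode σ (2 * i - 1)) ∧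
       (∀ i : ℕ, 1 ≤ i → 2 * i + 1 ≤ n → lcode σ (2 * i) ≤ lcode σ (2 * i + 1))) := by
  constructor
  · intro h
    constructor
    · intro i hi hn
      set k : ℕ := 2 * i - 2 with hk
      have hkn : k + 1 < n := by omega
      set i0 : Fin n := ⟨k, Nat.lt_of_succ_lt hkn⟩ with hi0
      set j0 : Fin n := ⟨k + 1, hkn⟩ with hj0
      have hd : σ j0 < σ i0 := by
        have := h k hkn
        rw [if_pos (by omega : k % 2 = 0)] at this
        exact this
      have h1 : lcode σ (2 * i - 1) = fcode σ i0 := by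
        have : 2 * i - 1 = (i0 : ℕ) + 1 := by simp [hi0]; omega
        rw [this, lcode_eq]
      have h2 : lcode σ (2 * i) = fcode σ j0 := by
        have : 2 * i = (j0 : ℕ) + 1 := by simp [hj0]; omega
        rw [this, lcode_eq]
      rw [h1, h2]
      exact (descent_iff σ (by simp [hi0, hj0])).mp hd
    · intro i hi hn
      set k : ℕ := 2 * i - 1 with hk
      have hkn : k + 1 < n := by omega
      set i0 : Fin n := ⟨k, Nat.lt_of_succ_lt hkn⟩ with hi0
      set j0 : Fin n := ⟨k + 1, hkn⟩ with hj0
      have hd : σ i0 < σ j0 := by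
        have := h k hkn
        rw [if_neg (by omega : ¬ k % 2 = 0)] at this
        exact this
      have h1 : lcode σ (2 * i) = fcode σ i0 := by
        have : 2 * i = (i0 : ℕ) + 1 := by simp [hi0]; omega
        rw [this, lcode_eq]
      have h2 : lcode σ (2 * i + 1) = fcode σ j0 := by
        have : 2 * i + 1 = (j0 : ℕ) + 1 := by simp [hj0]; omega
        rw [this, lcode_eq]
      rw [h1, h2]
      exact (ascent_iff σ (by simp [hi0, hj0])).mp hd
  · rintro ⟨h1, h2⟩ k hkn
    set i0 : Fin n := ⟨k, Nat.lt_of_succ_lt hkn⟩ with hi0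
    set j0 : Fin n := ⟨k + 1, hkn⟩ with hj0
    by_cases hp : k % 2 = 0
    · rw [if_pos hp]
      set i : ℕ := k / 2 + 1 with hi
      have e1 : 2 * i - 1 = k + 1 := by omega
      have e2 : 2 * i - 2 = k := by omega
      have := h1 i (by omega) (by omega)
      have hli : lcode σ (2 * i - 1) = fcode σ i0 := by
        have : 2 * i - 1 = (i0 : ℕ) + 1 := by simp [hi0]; omega
        rw [this, lcode_eq]
      have hlj : lcode σ (2 * i) = fcode σ j0 := by
        have : 2 * i = (j0 : ℕ) + 1 := by simp [hj0]; omega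
        rw [this, lcode_eq]
      rw [hli, hlj] at this
      exact (descent_iff σ (by simp [hi0, hj0])).mpr this
    · rw [if_neg hp]
      set i : ℕ := (k + 1) / 2 with hi
      have := h2 i (by omega) (by omega)
      have hli : lcode σ (2 * i) = fcode σ i0 := by
        have : 2 * i = (i0 : ℕ) + 1 := by simp [hi0]; omega
        rw [this, lcode_eq]
      have hlj : lcode σ (2 * i + 1) = fcode σ j0 := by
        have : 2 * i + 1 = (j0 : ℕ) + 1 := by simp [hj0]; omega
        rw [this, lcode_eq]
      rw [hli, hlj] at this
      exact (ascent_iff σ (by simp [hi0, hj0])).mpr this
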